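/- Suppose the utility function f is adaptive monotone and adaptive submodular with respect to the prior P(w) over world maps. Then the adaptive greedy policy π_GR, which at each step visits the node with highest expected marginal gain under the posterior P(w|ψ), satisfies E_{w~P(w)}[f(π_GR, w)] ≥ (1 - 1/e)·E_{w~P(w)}[f(π*, w)] for every policy π* selecting the same number of nodes. -/

import Mathlib

/-!
Write `g t` for the expected utility of the greedy policy after `t` steps and `OPT` for that
of `π*` after `T` steps. Running `π*` and then `t` greedy steps can only help (adaptive
monotonicity), so `OPT` is at most the expected utility of `ψ*_T ∪ ψGR_t`. Running the `t`
greedy steps first and then `π*`, each step of `π*` gains in expectation at most the greedy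
step `t + 1`: a node's posterior gain only shrinks along longer histories (adaptive
submodularity) and the greedy node maximises it. Hence `OPT ≤ g t + T (g (t+1) - g t)`, so the
gap `OPT - g t` shrinks by the factor `1 - 1/T` per step, and `(1 - 1/T)^T ≤ 1/e`.

The expected gain of one step is computed by conditioning on the history generated so far:
the worlds generating a given history are exactly those consistent with it.
-/

open Finset

section AdaptiveSubmodular

variable {W V O : Type*} [Fintype W] [Fintype V] [DecidableEq V] [DecidableEq O]

/-- A deterministic adaptive policy maps the history of (node, observation) pairs to
the next node to visit. -/
def AdaptivePolicy (V O : Type*) : Type _ := List (V × O) → V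

/-- The history obtained after running policy `π` for `n` steps in world `w`, where
visiting node `v` in world `w` yields observation `obs v w`. -/
def runHist (obs : V → W → O) (π : AdaptivePolicy V O) (w : W) : ℕ → List (V × O)
  | 0 => []
  | (n + 1) =>
      let h := runHist obs π w n
      h ++ [(π h, obs (π h) w)]

/-- The set of nodes visited along a history. -/
def histNodes (h : List (V × O)) : Finset V := (h.map Prod.fst).toFinset

/-- A world is consistent with a history if it would have produced the recorded
observations. -/
def consistent (obs : V → W → O) (h : List (V × O)) (w : W) : Prop :=
  ∀ pr ∈ h, obs pr.1 w = pr.2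

instance (obs : V → W → O) (h : List (V × O)) (w : W) :
    Decidable (consistent obs h w) := by unfold consistent; infer_instance

/-- Unnormalized posterior mass of the worlds consistent with a history. -/
noncomputable def histMass (obs : V → W → O) (p : W → ℝ) (h : List (V × O)) : ℝ :=
  ∑ w, if consistent obs h w then p w else 0

/-- Unnormalized expected marginal gain `E_{w ~ P(w|ψ)}[Δ(v | V_ψ, w)] · P(ψ)` of
visiting `v` after history `h`. -/
noncomputable def condGain (obs : V → W → O) (p : W → ℝ) (f : Finset V → W → ℝ)
    (h : List (V × O)) (v : V) : ℝ :=
  ∑ w, (if consistent obs h w then p w else 0) *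
    (f (insert v (histNodes h)) w - f (histNodes h) w)

end AdaptiveSubmodular

section History

variable {W V O : Type*} (obs : V → W → O)

theorem runHist_succ (π : AdaptivePolicy V O) (w : W) (n : ℕ) :
    runHist obs π w (n + 1) =
      runHist obs π w n ++ [(π (runHist obs π w n), obs (π (runHist obs π w n)) w)] :=
  rfl

@[simp]
theorem runHist_zero (π : AdaptivePolicy V O) (w : W) : runHist obs π w 0 = [] := rfl

theorem length_runHist (π : AdaptivePolicy V O) (w : W) (n : ℕ) :
    (runHist obs π w n).length = n := by
  induction n with
  | zero => rfl
  | succ n ih => simp [runHist_succ, ih]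

variable {obs}

@[simp]
theorem consistent_nil (w : W) : consistent obs [] w := by
  simp [consistent]

@[simp]
theorem consistent_append {a b : List (V × O)} {w : W} :
    consistent obs (a ++ b) w ↔ consistent obs a w ∧ consistent obs b w := by
  simp only [consistent, List.mem_append, or_imp, forall_and]

theorem consistent_runHist_self (π : AdaptivePolicy V O) (w : W) (n : ℕ) :
    consistent obs (runHist obs π w n) w := by
  induction n with
  | zero => simp
  | succ n ih => exact consistent_append.2 ⟨ih, by simp [consistent]⟩

theorem consistent_runHist_iff {π : AdaptivePolicy V O} {w w' : W} {n : ℕ} :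
    consistent obs (runHist obs π w n) w' ↔ runHist obs π w' n = runHist obs π w n := by
  refine ⟨fun h => ?_, fun h => h ▸ consistent_runHist_self π w' n⟩
  induction n with
  | zero => rfl
  | succ n ih =>
    simp only [runHist_succ, consistent_append] at h ⊢
    obtain ⟨hprev, hlast⟩ := h
    rw [ih hprev, hlast _ (List.mem_singleton_self _)]

variable [DecidableEq V]

theorem histNodes_append (a b : List (V × O)) :
    histNodes (a ++ b) = histNodes a ∪ histNodes b := by
  simp [histNodes]

theorem histNodes_concat (l : List (V × O)) (v : V) (o : O) :
    histNodes (l ++ [(v, o)]) = insert v (histNodes l) := by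
  simp [histNodes, Finset.union_comm]

end History

namespace AdaptivePolicy

variable {W V O : Type*} (obs : V → W → O)

/-- The concatenated policy `π₁ @ π₂` of Golovin–Krause, with `π₁` truncated to `t` steps. -/
def append (π₁ : AdaptivePolicy V O) (t : ℕ) (π₂ : AdaptivePolicy V O) : AdaptivePolicy V O :=
  fun h => if h.length < t then π₁ h else π₂ (h.drop t)

theorem runHist_append_of_le (π₁ π₂ : AdaptivePolicy V O) {t n : ℕ} (hn : n ≤ t) (w : W) :
    runHist obs (π₁.append t π₂) w n = runHist obs π₁ w n := by
  induction n with
  | zero => rfl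
  | succ n ih =>
    have hlt : (runHist obs π₁ w n).length < t := by rw [length_runHist]; omega
    simp only [runHist_succ, ih (by omega), append, if_pos hlt]

theorem runHist_append_add (π₁ π₂ : AdaptivePolicy V O) (t k : ℕ) (w : W) :
    runHist obs (π₁.append t π₂) w (t + k) = runHist obs π₁ w t ++ runHist obs π₂ w k := by
  induction k with
  | zero => simpa using runHist_append_of_le obs π₁ π₂ le_rfl w
  | succ k ih =>
    have hdrop : (runHist obs π₁ w t ++ runHist obs π₂ w k).drop t = runHist obs π₂ w k :=
      List.drop_left' (length_runHist obs π₁ w t)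
    simp [← add_assoc, runHist_succ, ih, append, hdrop, length_runHist]

end AdaptivePolicy

section TotalExpectation

variable {W β : Type*} [Fintype W] [DecidableEq β]

/-- The law of total expectation on a finite space, conditioning on the fibres of `κ`. -/
theorem sum_mul_eq_sum_fiber_average (κ : W → β) {p : W → ℝ} (hp : ∀ w, 0 ≤ p w)
    (g : W → ℝ) :
    ∑ w, p w * g w =
      ∑ w, p w / (∑ w' with κ w' = κ w, p w') * ∑ w' with κ w' = κ w, p w' * g w' := by
  set m : W → ℝ := fun w => ∑ w' with κ w' = κ w, p w'
  have hfiber : ∀ w, (∑ w' with κ w' = κ w, p w' / m w) * (p w * g w) = p w * g w := by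
    intro w
    rw [← Finset.sum_div]
    rcases eq_or_ne (m w) 0 with h0 | h0
    · have hpw : p w = 0 := le_antisymm
        (h0 ▸ Finset.single_le_sum (fun w' _ => hp w') (by simp)) (hp w)
      simp [hpw]
    · rw [div_self h0, one_mul]
  calc ∑ w, p w * g w
      = ∑ w, ∑ w' with κ w' = κ w, p w' / m w * (p w * g w) := by
        simp_rw [← Finset.sum_mul, hfiber]
    _ = ∑ w, ∑ w' with κ w' = κ w, p w / m w * (p w' * g w') := by
        rw [Finset.sum_comm' (t' := Finset.univ) (s' := fun w => {w' | κ w' = κ w})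
          (by simp [eq_comm])]
        refine Finset.sum_congr rfl fun w _ => Finset.sum_congr rfl fun w' hw' => ?_
        have hm : m w' = m w := by simp only [m, (Finset.mem_filter.1 hw').2]
        rw [hm]
    _ = _ := by simp only [m, Finset.mul_sum]

end TotalExpectation

section ExpectedUtility

variable {W V O : Type*} [Fintype W] [DecidableEq O] {obs : V → W → O} {p : W → ℝ}

theorem histMass_nonneg (hp : ∀ w, 0 ≤ p w) (h : List (V × O)) : 0 ≤ histMass obs p h :=
  Finset.sum_nonneg fun w _ => by split_ifs <;> simp [hp w]

variable [DecidableEq V]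

/-- The paper's `f_avg(π)` for `π` truncated to `n` steps. -/
noncomputable def expectedUtility (obs : V → W → O) (p : W → ℝ) (f : Finset V → W → ℝ)
    (π : AdaptivePolicy V O) (n : ℕ) : ℝ :=
  ∑ w, p w * f (histNodes (runHist obs π w n)) w

variable {f : Finset V → W → ℝ}

theorem histMass_runHist (π : AdaptivePolicy V O) (w : W) (n : ℕ) :
    histMass obs p (runHist obs π w n) =
      ∑ w' with runHist obs π w' n = runHist obs π w n, p w' := by
  simp only [histMass, Finset.sum_filter, consistent_runHist_iff]

theorem condGain_runHist (π : AdaptivePolicy V O) (w : W) (n : ℕ) (v : V) :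
    condGain obs p f (runHist obs π w n) v =
      ∑ w' with runHist obs π w' n = runHist obs π w n,
        p w' * (f (insert v (histNodes (runHist obs π w' n))) w' -
          f (histNodes (runHist obs π w' n)) w') := by
  rw [condGain, Finset.sum_filter]
  refine Finset.sum_congr rfl fun w' _ => ?_
  by_cases hw' : runHist obs π w' n = runHist obs π w n <;> simp [consistent_runHist_iff, hw']

theorem expectedUtility_succ_sub (hp : ∀ w, 0 ≤ p w) (π : AdaptivePolicy V O) (n : ℕ) :
    expectedUtility obs p f π (n + 1) - expectedUtility obs p f π n =
      ∑ w, p w / histMass obs p (runHist obs π w n) *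
        condGain obs p f (runHist obs π w n) (π (runHist obs π w n)) := by
  have hstep : expectedUtility obs p f π (n + 1) - expectedUtility obs p f π n =
      ∑ w, p w * (f (insert (π (runHist obs π w n)) (histNodes (runHist obs π w n))) w -
        f (histNodes (runHist obs π w n)) w) := by
    simp only [expectedUtility, ← Finset.sum_sub_distrib, runHist_succ, histNodes_concat, mul_sub]
  rw [hstep, sum_mul_eq_sum_fiber_average (fun w => runHist obs π w n) hp]
  refine Finset.sum_congr rfl fun w _ => ?_
  rw [histMass_runHist, condGain_runHist]
  congr 1
  refine Finset.sum_congr rfl fun w' hw' => ?_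
  rw [(Finset.mem_filter.1 hw').2]

theorem expectedUtility_monotone (hp : ∀ w, 0 ≤ p w)
    (hmono : ∀ h v, 0 ≤ condGain obs p f h v) (π : AdaptivePolicy V O) :
    Monotone (expectedUtility obs p f π) := by
  refine monotone_nat_of_le_succ fun n => sub_nonneg.1 ?_
  rw [expectedUtility_succ_sub hp]
  exact Finset.sum_nonneg fun w _ =>
    mul_nonneg (div_nonneg (hp w) (histMass_nonneg hp _)) (hmono _ _)

theorem expectedUtility_succ_sub_le_of_prefix (hp : ∀ w, 0 ≤ p w)
    (hsub : ∀ h h' : List (V × O), h <+: h' → ∀ v,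
      condGain obs p f h' v / histMass obs p h' ≤ condGain obs p f h v / histMass obs p h)
    {σ π : AdaptivePolicy V O} {n t : ℕ}
    (hprefix : ∀ w, runHist obs π w t <+: runHist obs σ w n)
    (hgreedy : ∀ w v, condGain obs p f (runHist obs π w t) v ≤
      condGain obs p f (runHist obs π w t) (π (runHist obs π w t))) :
    expectedUtility obs p f σ (n + 1) - expectedUtility obs p f σ n ≤
      expectedUtility obs p f π (t + 1) - expectedUtility obs p f π t := by
  rw [expectedUtility_succ_sub hp, expectedUtility_succ_sub hp]
  refine Finset.sum_le_sum fun w _ => ?_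
  simp only [div_mul_eq_mul_div, mul_div_assoc]
  refine mul_le_mul_of_nonneg_left ?_ (hp w)
  exact (hsub _ _ (hprefix w) _).trans
    (div_le_div_of_nonneg_right (hgreedy w _) (histMass_nonneg hp _))

end ExpectedUtility

section GreedyRecursion

theorem le_add_mul_of_succ_sub_le {u : ℕ → ℝ} {d : ℝ} (h : ∀ k, u (k + 1) - u k ≤ d) (K : ℕ) :
    u K ≤ u 0 + K * d := by
  induction K with
  | zero => simp
  | succ K ih => push_cast; linarith [h K]

theorem one_sub_inv_exp_mul_le_of_gap {g : ℕ → ℝ} {OPT : ℝ} {T : ℕ} (hT : 0 < T)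
    (hg0 : 0 ≤ g 0) (hOPT : 0 ≤ OPT) (hgap : ∀ t < T, OPT ≤ g t + T * (g (t + 1) - g t)) :
    (1 - 1 / Real.exp 1) * OPT ≤ g T := by
  have hT' : (0 : ℝ) < T := by exact_mod_cast hT
  set c : ℝ := 1 - 1 / T with hc_def
  have hc : 0 ≤ c := sub_nonneg.2 ((div_le_one hT').2 (by exact_mod_cast hT))
  have hstep : ∀ t < T, OPT - g (t + 1) ≤ c * (OPT - g t) := by
    intro t ht
    have hfrac : (OPT - g t) / T ≤ g (t + 1) - g t := by
      rw [div_le_iff₀ hT']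
      linarith [hgap t ht]
    have hc_mul : c * (OPT - g t) = (OPT - g t) - (OPT - g t) / T := by ring
    linarith
  have hgeom : ∀ n ≤ T, OPT - g n ≤ c ^ n * (OPT - g 0) := by
    intro n hn
    induction n with
    | zero => simp
    | succ n ih =>
      calc OPT - g (n + 1) ≤ c * (OPT - g n) := hstep n hn
        _ ≤ c * (c ^ n * (OPT - g 0)) := mul_le_mul_of_nonneg_left (ih (by omega)) hc
        _ = c ^ (n + 1) * (OPT - g 0) := by ring
  have hexp : c ^ T ≤ 1 / Real.exp 1 := by
    simpa [hc_def, Real.exp_neg] using Real.one_sub_div_pow_le_exp_neg (t := 1) (n := T)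
      (by exact_mod_cast hT)
  have hinv : 0 ≤ 1 / Real.exp 1 := by positivity
  have hfinal : c ^ T * (OPT - g 0) ≤ 1 / Real.exp 1 * OPT := by
    rcases le_total 0 (OPT - g 0) with hgap0 | hgap0
    · calc c ^ T * (OPT - g 0) ≤ 1 / Real.exp 1 * (OPT - g 0) :=
            mul_le_mul_of_nonneg_right hexp hgap0
        _ ≤ 1 / Real.exp 1 * OPT := mul_le_mul_of_nonneg_left (by linarith) hinv
    · exact (mul_nonpos_of_nonneg_of_nonpos (pow_nonneg hc T) hgap0).trans
        (mul_nonneg hinv hOPT)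
  linarith [hgeom T le_rfl]

end GreedyRecursion

section AdaptiveSubmodular

variable {W V O : Type*} [Fintype W] [Fintype V] [DecidableEq V] [DecidableEq O]

set_option linter.unusedSectionVars false in
theorem adaptive_greedy_near_optimal_general
    (obs : V → W → O) (p : W → ℝ) (f : Finset V → W → ℝ) (T : ℕ)
    (hp0 : ∀ w, 0 ≤ p w)
    (hf0 : ∀ (S : Finset V) (w : W), 0 ≤ f S w)
    (hmono : ∀ (h : List (V × O)) (v : V), 0 ≤ condGain obs p f h v)
    (hsub : ∀ (h h' : List (V × O)), h <+: h' → ∀ v : V,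
      condGain obs p f h' v / histMass obs p h' ≤
        condGain obs p f h v / histMass obs p h)
    (πGR : AdaptivePolicy V O)
    (hgreedy : ∀ (w0 : W) (k : ℕ), k < T → ∀ v : V,
      condGain obs p f (runHist obs πGR w0 k) v ≤
        condGain obs p f (runHist obs πGR w0 k) (πGR (runHist obs πGR w0 k))) :
    ∀ πstar : AdaptivePolicy V O,
      (1 - 1 / Real.exp 1) * ∑ w, p w * f (histNodes (runHist obs πstar w T)) w ≤
        ∑ w, p w * f (histNodes (runHist obs πGR w T)) w := by
  intro πstar
  change (1 - 1 / Real.exp 1) * expectedUtility obs p f πstar T ≤ expectedUtility obs p f πGR T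
  have hE : ∀ π n, 0 ≤ expectedUtility obs p f π n := fun π n =>
    Finset.sum_nonneg fun w _ => mul_nonneg (hp0 w) (hf0 _ w)
  rcases T.eq_zero_or_pos with rfl | hT
  · exact mul_le_of_le_one_left (hE πGR 0) (sub_le_self 1 (by positivity))
  refine one_sub_inv_exp_mul_le_of_gap hT (hE πGR 0) (hE πstar T) fun t ht => ?_
  set σ := πGR.append t πstar
  calc expectedUtility obs p f πstar T
      = expectedUtility obs p f (πstar.append T πGR) T := by
        simp only [expectedUtility, AdaptivePolicy.runHist_append_of_le obs πstar πGR le_rfl]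
    _ ≤ expectedUtility obs p f (πstar.append T πGR) (T + t) :=
        expectedUtility_monotone hp0 hmono _ (Nat.le_add_right T t)
    _ = expectedUtility obs p f σ (t + T) := by
        simp only [σ, expectedUtility, AdaptivePolicy.runHist_append_add, histNodes_append,
          Finset.union_comm]
    _ ≤ expectedUtility obs p f σ (t + 0) +
          T * (expectedUtility obs p f πGR (t + 1) - expectedUtility obs p f πGR t) :=
        le_add_mul_of_succ_sub_le (u := fun k => expectedUtility obs p f σ (t + k))
          (fun k => expectedUtility_succ_sub_le_of_prefix hp0 hsub
            (fun w => ⟨_, (AdaptivePolicy.runHist_append_add obs πGR πstar t k w).symm⟩)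
            (hgreedy · t ht)) T
    _ = _ := by
        simp only [σ, expectedUtility, AdaptivePolicy.runHist_append_add, runHist_zero,
          List.append_nil]

/-- Golovin–Krause: if the utility `f` is adaptive monotone and adaptive submodular
with respect to the prior `p` over world maps, then the adaptive greedy policy
`πGR` — which at each step visits the node with highest expected marginal gain
under the posterior — is `(1 - 1/e)`-optimal among all policies selecting the same
number `T` of nodes. -/
theorem adaptive_greedy_near_optimal
    (obs : V → W → O) (p : W → ℝ) (f : Finset V → W → ℝ) (T : ℕ)
    (hp0 : ∀ w, 0 ≤ p w) (hp1 : ∑ w, p w = 1)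
    (hf0 : ∀ (S : Finset V) (w : W), 0 ≤ f S w)
    (hmono : ∀ (h : List (V × O)) (v : V), 0 ≤ condGain obs p f h v)
    (hsub : ∀ (h h' : List (V × O)), h <+: h' → ∀ v : V,
      condGain obs p f h' v / histMass obs p h' ≤
        condGain obs p f h v / histMass obs p h)
    (πGR : AdaptivePolicy V O)
    (hgreedy : ∀ (w0 : W) (k : ℕ), k < T → ∀ v : V,
      condGain obs p f (runHist obs πGR w0 k) v ≤
        condGain obs p f (runHist obs πGR w0 k) (πGR (runHist obs πGR w0 k))) :
    ∀ πstar : AdaptivePolicy V O,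
      (1 - 1 / Real.exp 1) * ∑ w, p w * f (histNodes (runHist obs πstar w T)) w ≤
        ∑ w, p w * f (histNodes (runHist obs πGR w T)) w :=
  adaptive_greedy_near_optimal_general obs p f T hp0 hf0 hmono hsub πGR hgreedy

end AdaptiveSubmodular
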